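/- Let K1 and K2 be quantum channels with fixed points ρ1 and ρ2 respectively. Suppose τ is a positive integer with sup_ρ ‖K1^τ[ρ] − ρ1‖₁ ≤ ε/2 and τ·‖K1 − K2‖_{1→1} ≤ ε/2. Then for every density matrix ρ, ‖K2^τ[ρ] − ρ2‖₁ ≤ 2ε. (In particular the mixing time of K2 to accuracy 2ε is at most τ.) -/

import Mathlib

open MeasureTheory Matrix
open scoped ComplexOrder

/-- The trace norm (Schatten 1-norm) of a complex square matrix. -/
noncomputable def traceNorm {n : Type*} [Fintype n] [DecidableEq n] (A : Matrix n n ℂ) : ℝ :=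
  (((Matrix.posSemidef_conjTranspose_mul_self A).1.eigenvectorUnitary.1 *
    Matrix.diagonal (((↑) : ℝ → ℂ) ∘ (Real.sqrt ·) ∘ (Matrix.posSemidef_conjTranspose_mul_self A).1.eigenvalues) *
    (star (Matrix.posSemidef_conjTranspose_mul_self A).1.eigenvectorUnitary : Matrix n n ℂ)).trace).re

/-- The operator norm (Schatten ∞-norm) of a complex square matrix. -/
noncomputable def opNorm {n : Type*} [Fintype n] [DecidableEq n] (A : Matrix n n ℂ) : ℝ :=
  ‖Matrix.toEuclideanCLM (𝕜 := ℂ) (n := n) A‖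

/-- A density matrix: positive semidefinite with unit trace. -/
def IsDensityMatrix {n : Type*} [Fintype n] [DecidableEq n] (ρ : Matrix n n ℂ) : Prop :=
  ρ.PosSemidef ∧ ρ.trace = 1

def IsTracePreserving {n : Type*} [Fintype n] [DecidableEq n]
    (Φ : Matrix n n ℂ →ₗ[ℂ] Matrix n n ℂ) : Prop :=
  ∀ A, (Φ A).trace = A.trace

/-- Complete positivity: all finite ampliations map positive semidefinite matrices to
positive semidefinite matrices. -/
def IsCompletelyPositive {n : Type*} [Fintype n] [DecidableEq n]
    (Φ : Matrix n n ℂ →ₗ[ℂ] Matrix n n ℂ) : Prop :=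
  ∀ (k : ℕ) (A : Matrix (n × Fin k) (n × Fin k) ℂ), A.PosSemidef →
    (Matrix.of fun (p q : n × Fin k) =>
      Φ (Matrix.of fun i j => A (i, p.2) (j, q.2)) p.1 q.1).PosSemidef

/-- A quantum channel: completely positive and trace preserving. -/
def IsQuantumChannel {n : Type*} [Fintype n] [DecidableEq n]
    (Φ : Matrix n n ℂ →ₗ[ℂ] Matrix n n ℂ) : Prop :=
  IsCompletelyPositive Φ ∧ IsTracePreserving Φ

/-- The induced 1→1 norm of a superoperator: supremum of trace norms of images of
density matrices. -/
noncomputable def norm11 {n : Type*} [Fintype n] [DecidableEq n]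
    (M : Matrix n n ℂ → Matrix n n ℂ) : ℝ :=
  ⨆ ρ : {ρ : Matrix n n ℂ // IsDensityMatrix ρ}, traceNorm (M ρ)

/-- The induced 1→1 norm of a superoperator: supremum of trace norms of images of the
trace-norm unit ball. -/
noncomputable def norm11Ball {n : Type*} [Fintype n] [DecidableEq n]
    (M : Matrix n n ℂ → Matrix n n ℂ) : ℝ :=
  ⨆ X : {X : Matrix n n ℂ // traceNorm X ≤ 1}, traceNorm (M X)



/-!
Write `‖·‖₁` for `traceNorm`; it equals `re tr |A|` with `|A| = CFC.abs A`. For `A, B ⪰ 0`,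
pairing `A - B` with its sign `S` (so `-1 ≤ S ≤ 1`) gives
`‖A - B‖₁ = re tr (A S) + re tr (B (-S)) ≤ tr A + tr B`. Applied to the Jordan decomposition
`X = X⁺ - X⁻`, this yields the triangle inequality on Hermitian matrices and the trace-norm
contractivity of channels. Telescoping then gives `‖K1^τ ρ - K2^τ ρ‖₁ ≤ τ ‖K1 - K2‖₁→₁`.
Since `K2^τ ρ2 = ρ2`, going from `ρ1` to `ρ2` via `K1^τ ρ2` shows `‖ρ1 - ρ2‖₁ ≤ ε`, and going from
`K2^τ ρ` to `ρ2` via `K1^τ ρ` and `ρ1` costs `ε/2 + ε/2 + ε`.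
-/

open scoped MatrixOrder

section

variable {n : Type*} [Fintype n] [DecidableEq n]

lemma traceNorm_eq_re_trace_abs (A : Matrix n n ℂ) : traceNorm A = (CFC.abs A).trace.re := by
  have hAA := posSemidef_conjTranspose_mul_self A
  have hsqrt : hAA.1.cfc Real.sqrt = CFC.abs A := by
    rw [← hAA.1.cfc_eq, ← cfcₙ_eq_cfc (hf0 := Real.sqrt_zero),
      ← CFC.sqrt_eq_real_sqrt _ hAA.nonneg]
    rfl
  rw [traceNorm, ← hsqrt]
  rfl

lemma traceNorm_neg (A : Matrix n n ℂ) : traceNorm (-A) = traceNorm A := by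
  simp only [traceNorm_eq_re_trace_abs, CFC.abs_neg]

lemma traceNorm_sub_comm (A B : Matrix n n ℂ) : traceNorm (A - B) = traceNorm (B - A) := by
  rw [← neg_sub, traceNorm_neg]

lemma re_trace_mul_nonneg {A B : Matrix n n ℂ} (hA : 0 ≤ A) (hB : 0 ≤ B) :
    0 ≤ (A * B).trace.re := by
  have hconj : (A * B).trace = (star (CFC.sqrt A) * B * CFC.sqrt A).trace := by
    conv_lhs => rw [← CFC.sqrt_mul_sqrt_self A hA, mul_assoc, trace_mul_comm]
    rw [(CFC.sqrt_nonneg A).star_eq]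
  rw [hconj]
  exact (Complex.nonneg_iff.mp (star_left_conjugate_nonneg hB _).posSemidef.trace_nonneg).1

lemma re_trace_mul_le_of_le_one {A S : Matrix n n ℂ} (hA : 0 ≤ A) (hS : S ≤ 1) :
    (A * S).trace.re ≤ A.trace.re := by
  have h := re_trace_mul_nonneg hA (sub_nonneg.mpr hS)
  rw [mul_sub, mul_one, trace_sub, Complex.sub_re] at h
  linarith

lemma IsSelfAdjoint.mul_cfc_sign_eq_abs {X : Matrix n n ℂ} (hX : IsSelfAdjoint X) :
    X * cfc (fun x : ℝ => (SignType.sign x : ℝ)) X = CFC.abs X := by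
  rw [CFC.abs_eq_cfc_norm X]
  nth_rewrite 1 [← cfc_id' ℝ X]
  rw [← cfc_mul _ _ X (hg := X.finite_real_spectrum.continuousOn _)]
  exact cfc_congr fun x _ => by simp [self_mul_sign]

lemma cfc_sign_le_one (X : Matrix n n ℂ) : cfc (fun x : ℝ => (SignType.sign x : ℝ)) X ≤ 1 :=
  cfc_le_one _ X fun x _ => by rcases lt_trichotomy x 0 with hx | hx | hx <;> simp [hx]

lemma neg_cfc_sign_le_one (X : Matrix n n ℂ) :
    -cfc (fun x : ℝ => (SignType.sign x : ℝ)) X ≤ 1 := by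
  rw [← cfc_neg]
  exact cfc_le_one _ X fun x _ => by rcases lt_trichotomy x 0 with hx | hx | hx <;> simp [hx]

lemma traceNorm_sub_le_of_posSemidef {A B : Matrix n n ℂ} (hA : A.PosSemidef)
    (hB : B.PosSemidef) : traceNorm (A - B) ≤ A.trace.re + B.trace.re := by
  set S := cfc (fun x : ℝ => (SignType.sign x : ℝ)) (A - B)
  have hS : traceNorm (A - B) = (A * S).trace.re + (B * -S).trace.re := by
    rw [traceNorm_eq_re_trace_abs, ← (hA.1.sub hB.1).isSelfAdjoint.mul_cfc_sign_eq_abs, sub_mul,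
      mul_neg, trace_neg, trace_sub, Complex.sub_re, Complex.neg_re, sub_eq_add_neg]
  rw [hS]
  exact add_le_add (re_trace_mul_le_of_le_one hA.nonneg (cfc_sign_le_one _))
    (re_trace_mul_le_of_le_one hB.nonneg (neg_cfc_sign_le_one _))

lemma Matrix.IsHermitian.traceNorm_eq {X : Matrix n n ℂ} (hX : X.IsHermitian) :
    traceNorm X = (X⁺).trace.re + (X⁻).trace.re := by
  rw [traceNorm_eq_re_trace_abs, ← CFC.posPart_add_negPart X hX.isSelfAdjoint, trace_add,
    Complex.add_re]

lemma Matrix.IsHermitian.traceNorm_add_le {X Y : Matrix n n ℂ} (hX : X.IsHermitian)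
    (hY : Y.IsHermitian) : traceNorm (X + Y) ≤ traceNorm X + traceNorm Y := by
  have h := traceNorm_sub_le_of_posSemidef
    (add_nonneg (CFC.posPart_nonneg X) (CFC.posPart_nonneg Y)).posSemidef
    (add_nonneg (CFC.negPart_nonneg X) (CFC.negPart_nonneg Y)).posSemidef
  rw [add_sub_add_comm, CFC.posPart_sub_negPart X hX.isSelfAdjoint,
    CFC.posPart_sub_negPart Y hY.isSelfAdjoint] at h
  simp only [trace_add, Complex.add_re] at h
  rw [hX.traceNorm_eq, hY.traceNorm_eq]
  linarith

lemma traceNorm_sub_le_traceNorm_sub_add_traceNorm_sub {X Y Z : Matrix n n ℂ}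
    (hX : X.IsHermitian) (hY : Y.IsHermitian) (hZ : Z.IsHermitian) :
    traceNorm (X - Z) ≤ traceNorm (X - Y) + traceNorm (Y - Z) := by
  simpa using (hX.sub hY).traceNorm_add_le (hY.sub hZ)

variable {Φ : Matrix n n ℂ →ₗ[ℂ] Matrix n n ℂ}

lemma IsCompletelyPositive.map_posSemidef (hΦ : IsCompletelyPositive Φ) {A : Matrix n n ℂ}
    (hA : A.PosSemidef) : (Φ A).PosSemidef :=
  (hΦ 1 (.of fun p q => A p.1 q.1) (hA.submatrix Prod.fst)).submatrix fun i => (i, 0)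

lemma IsQuantumChannel.map_isDensityMatrix (hΦ : IsQuantumChannel Φ) {ρ : Matrix n n ℂ}
    (hρ : IsDensityMatrix ρ) : IsDensityMatrix (Φ ρ) :=
  ⟨hΦ.1.map_posSemidef hρ.1, (hΦ.2 ρ).trans hρ.2⟩

lemma IsQuantumChannel.iterate_isDensityMatrix (hΦ : IsQuantumChannel Φ) {ρ : Matrix n n ℂ}
    (hρ : IsDensityMatrix ρ) (m : ℕ) : IsDensityMatrix ((⇑Φ)^[m] ρ) := by
  induction m with
  | zero => exact hρ
  | succ m ih => exact Function.iterate_succ_apply' Φ m ρ ▸ hΦ.map_isDensityMatrix ih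

lemma IsQuantumChannel.traceNorm_map_le (hΦ : IsQuantumChannel Φ) {X : Matrix n n ℂ}
    (hX : X.IsHermitian) : traceNorm (Φ X) ≤ traceNorm X := by
  have h := traceNorm_sub_le_of_posSemidef (hΦ.1.map_posSemidef (CFC.posPart_nonneg X).posSemidef)
    (hΦ.1.map_posSemidef (CFC.negPart_nonneg X).posSemidef)
  rwa [← map_sub, CFC.posPart_sub_negPart X hX.isSelfAdjoint, hΦ.2, hΦ.2,
    ← hX.traceNorm_eq] at h

lemma traceNorm_sub_le_norm11 {K1 K2 : Matrix n n ℂ →ₗ[ℂ] Matrix n n ℂ}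
    (hK1 : IsQuantumChannel K1) (hK2 : IsQuantumChannel K2) {ρ : Matrix n n ℂ}
    (hρ : IsDensityMatrix ρ) : traceNorm (K1 ρ - K2 ρ) ≤ norm11 (fun σ => K1 σ - K2 σ) := by
  have hbdd : BddAbove (Set.range fun σ : {σ // IsDensityMatrix σ} =>
      traceNorm (K1 σ.1 - K2 σ.1)) := by
    refine ⟨2, ?_⟩
    rintro _ ⟨⟨σ, hσ⟩, rfl⟩
    have h := traceNorm_sub_le_of_posSemidef (hK1.map_isDensityMatrix hσ).1
      (hK2.map_isDensityMatrix hσ).1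
    rw [(hK1.map_isDensityMatrix hσ).2, (hK2.map_isDensityMatrix hσ).2, Complex.one_re] at h
    linarith
  exact le_ciSup hbdd ⟨ρ, hρ⟩

lemma traceNorm_iterate_sub_iterate_le {K1 K2 : Matrix n n ℂ →ₗ[ℂ] Matrix n n ℂ}
    (hK1 : IsQuantumChannel K1) (hK2 : IsQuantumChannel K2) {ρ : Matrix n n ℂ}
    (hρ : IsDensityMatrix ρ) (m : ℕ) :
    traceNorm ((⇑K1)^[m] ρ - (⇑K2)^[m] ρ) ≤ m * norm11 (fun σ => K1 σ - K2 σ) := by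
  induction m with
  | zero => simp [traceNorm_eq_re_trace_abs]
  | succ m ih =>
    have h1 := hK1.iterate_isDensityMatrix hρ m
    have h2 := hK2.iterate_isDensityMatrix hρ m
    rw [Function.iterate_succ_apply', Function.iterate_succ_apply']
    calc traceNorm (K1 ((⇑K1)^[m] ρ) - K2 ((⇑K2)^[m] ρ))
        ≤ traceNorm (K1 ((⇑K1)^[m] ρ) - K1 ((⇑K2)^[m] ρ))
          + traceNorm (K1 ((⇑K2)^[m] ρ) - K2 ((⇑K2)^[m] ρ)) :=
          traceNorm_sub_le_traceNorm_sub_add_traceNorm_sub (hK1.map_isDensityMatrix h1).1.1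
            (hK1.map_isDensityMatrix h2).1.1 (hK2.map_isDensityMatrix h2).1.1
      _ ≤ m * norm11 (fun σ => K1 σ - K2 σ) + norm11 (fun σ => K1 σ - K2 σ) := by
          rw [← map_sub]
          exact add_le_add ((hK1.traceNorm_map_le (h1.1.1.sub h2.1.1)).trans ih)
            (traceNorm_sub_le_norm11 hK1 hK2 h2)
      _ = (m + 1 : ℕ) * norm11 (fun σ => K1 σ - K2 σ) := by push_cast; ring

lemma traceNorm_sub_le_of_isFixedPt {K1 K2 : Matrix n n ℂ →ₗ[ℂ] Matrix n n ℂ}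
    (hK1 : IsQuantumChannel K1) (hK2 : IsQuantumChannel K2) {ρ1 ρ2 : Matrix n n ℂ}
    (hρ1 : ρ1.IsHermitian) (hρ2 : IsDensityMatrix ρ2) (hfix2 : Function.IsFixedPt K2 ρ2)
    (τ : ℕ) :
    traceNorm (ρ1 - ρ2) ≤
      traceNorm ((⇑K1)^[τ] ρ2 - ρ1) + τ * norm11 (fun σ => K1 σ - K2 σ) := by
  calc traceNorm (ρ1 - ρ2)
      ≤ traceNorm (ρ1 - (⇑K1)^[τ] ρ2) + traceNorm ((⇑K1)^[τ] ρ2 - ρ2) :=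
        traceNorm_sub_le_traceNorm_sub_add_traceNorm_sub hρ1
          (hK1.iterate_isDensityMatrix hρ2 τ).1.1 hρ2.1.1
    _ = traceNorm ((⇑K1)^[τ] ρ2 - ρ1) + traceNorm ((⇑K1)^[τ] ρ2 - (⇑K2)^[τ] ρ2) := by
        rw [traceNorm_sub_comm ρ1, (hfix2.iterate τ).eq]
    _ ≤ _ := by gcongr; exact traceNorm_iterate_sub_iterate_le hK1 hK2 hρ2 τ

end

theorem mixing_time_of_close_channel_general {n : Type*} [Fintype n] [DecidableEq n]
    (K1 K2 : Matrix n n ℂ →ₗ[ℂ] Matrix n n ℂ)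
    (hK1 : IsQuantumChannel K1) (hK2 : IsQuantumChannel K2)
    (ρ1 ρ2 : Matrix n n ℂ) (hρ1 : IsDensityMatrix ρ1) (hρ2 : IsDensityMatrix ρ2)
    (hfix2 : K2 ρ2 = ρ2)
    (τ : ℕ) (ε : ℝ)
    (hmix : ∀ ρ : Matrix n n ℂ, IsDensityMatrix ρ → traceNorm ((⇑K1)^[τ] ρ - ρ1) ≤ ε / 2)
    (hclose : (τ : ℝ) * norm11 (fun ρ => K1 ρ - K2 ρ) ≤ ε / 2) :
    ∀ ρ : Matrix n n ℂ, IsDensityMatrix ρ →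
      traceNorm ((⇑K2)^[τ] ρ - ρ2) ≤ 2 * ε := by
  intro ρ hρ
  have hK1ρ := hK1.iterate_isDensityMatrix hρ τ
  have hfixed : traceNorm (ρ1 - ρ2) ≤ ε := by
    linarith [traceNorm_sub_le_of_isFixedPt hK1 hK2 hρ1.1.1 hρ2 hfix2 τ, hmix ρ2 hρ2]
  have hdrift : traceNorm ((⇑K2)^[τ] ρ - (⇑K1)^[τ] ρ) ≤ ε / 2 := by
    rw [traceNorm_sub_comm]
    exact (traceNorm_iterate_sub_iterate_le hK1 hK2 hρ τ).trans hclose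
  calc traceNorm ((⇑K2)^[τ] ρ - ρ2)
      ≤ traceNorm ((⇑K2)^[τ] ρ - (⇑K1)^[τ] ρ) + traceNorm ((⇑K1)^[τ] ρ - ρ2) :=
        traceNorm_sub_le_traceNorm_sub_add_traceNorm_sub
          (hK2.iterate_isDensityMatrix hρ τ).1.1 hK1ρ.1.1 hρ2.1.1
    _ ≤ traceNorm ((⇑K2)^[τ] ρ - (⇑K1)^[τ] ρ)
          + (traceNorm ((⇑K1)^[τ] ρ - ρ1) + traceNorm (ρ1 - ρ2)) := by
        gcongr
        exact traceNorm_sub_le_traceNorm_sub_add_traceNorm_sub hK1ρ.1.1 hρ1.1.1 hρ2.1.1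
    _ ≤ ε / 2 + (ε / 2 + ε) := by gcongr; exact hmix ρ hρ
    _ = 2 * ε := by ring

theorem mixing_time_of_close_channel {n : Type*} [Fintype n] [DecidableEq n]
    (K1 K2 : Matrix n n ℂ →ₗ[ℂ] Matrix n n ℂ)
    (hK1 : IsQuantumChannel K1) (hK2 : IsQuantumChannel K2)
    (ρ1 ρ2 : Matrix n n ℂ) (hρ1 : IsDensityMatrix ρ1) (hρ2 : IsDensityMatrix ρ2)
    (hfix1 : K1 ρ1 = ρ1) (hfix2 : K2 ρ2 = ρ2)
    (τ : ℕ) (hτ : 0 < τ) (ε : ℝ)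
    (hmix : ∀ ρ : Matrix n n ℂ, IsDensityMatrix ρ → traceNorm ((⇑K1)^[τ] ρ - ρ1) ≤ ε / 2)
    (hclose : (τ : ℝ) * norm11 (fun ρ => K1 ρ - K2 ρ) ≤ ε / 2) :
    ∀ ρ : Matrix n n ℂ, IsDensityMatrix ρ →
      traceNorm ((⇑K2)^[τ] ρ - ρ2) ≤ 2 * ε :=
  mixing_time_of_close_channel_general K1 K2 hK1 hK2 ρ1 ρ2 hρ1 hρ2 hfix2 τ ε hmix hclose
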